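/- There exist constants c, C > 0 depending only on p (and the dimensions n, N) such that for every κ ≥ 0 and all matrices ξ₁, ξ₂ ∈ ℝ^{n×N} one has c·(κ + |ξ₁| + |ξ₁ − ξ₂|)^{p−2}|ξ₁ − ξ₂|² ≤ |V(ξ₁) − V(ξ₂)|² ≤ C·(κ + |ξ₁| + |ξ₁ − ξ₂|)^{p−2}|ξ₁ − ξ₂|², where the middle expression is interpreted as 0 when κ = 0 and ξ₁ = ξ₂ = 0. -/
import Mathlib

open Real
open scoped RealInnerProductSpace

/-- The nonlinear operator `V(ξ) = (κ + |ξ|)^((p-2)/2) ξ` on `n × N` real matrices,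
equipped with the Frobenius (Euclidean) norm; for `κ = 0` and `ξ = 0` the value is `0`. -/
noncomputable def Vop (n N : ℕ) (p κ : ℝ) (ξ : EuclideanSpace ℝ (Fin n × Fin N)) :
    EuclideanSpace ℝ (Fin n × Fin N) :=
  ((κ + ‖ξ‖) ^ ((p - 2) / 2)) • ξ

lemma bern_upper {y m : ℝ} (hy0 : 0 ≤ y) (hm : 1 ≤ m) :
    1 - y ^ m ≤ m * (1 - y) := by
  have h := one_add_mul_self_le_rpow_one_add (s := y - 1) (by linarith) hm
  have e : (1 + (y - 1)) = y := by ring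
  rw [e] at h; linarith

lemma diff_rpow_le (q : ℝ) (hq : 0 < q) {A B : ℝ} (hA : 0 < A) (hB0 : 0 ≤ B) (hBA : B ≤ A) :
    A * (A ^ q - B ^ q) ≤ (max q 1) * (A ^ q * (A - B)) := by
  have hK1 : 1 ≤ max q 1 := le_max_right _ _
  have hKq : q ≤ max q 1 := le_max_left _ _
  have hfa_pos : 0 < A ^ q := rpow_pos_of_pos hA q
  have hstep : A * (A ^ q - B ^ q) ≤ 1 * (A ^ q * (A - B)) ∨
      A * (A ^ q - B ^ q) ≤ q * (A ^ q * (A - B)) := by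
    rcases le_total q 1 with hq1 | hq1
    · left
      rcases eq_or_lt_of_le hB0 with hB | hB
      · rw [← hB, zero_rpow hq.ne']
        nlinarith
      · have h := rpow_le_rpow_of_nonpos hB hBA (by linarith : q - 1 ≤ 0)
        have e1 : A ^ q = A ^ (q-1) * A := by
          rw [← rpow_add_one hA.ne' (q-1)]; norm_num
        have e2 : B ^ q = B ^ (q-1) * B := by
          rw [← rpow_add_one hB.ne' (q-1)]; norm_num
        have h2 : A ^ (q-1) * (A * B) ≤ B ^ (q-1) * (A * B) :=
          mul_le_mul_of_nonneg_right h (by positivity)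
        have key : A ^ q * B ≤ A * B ^ q := by rw [e1, e2]; linarith [h2]
        linarith
    · right
      have hy0 : 0 ≤ B / A := by positivity
      have h1 : 1 - (B / A) ^ q ≤ q * (1 - B / A) := bern_upper hy0 hq1
      have hfb : B ^ q = (B / A) ^ q * A ^ q := by
        rw [← mul_rpow hy0 hA.le]; congr 1; field_simp
      have h2 : (A * A ^ q) * (1 - (B / A) ^ q) ≤ (A * A ^ q) * (q * (1 - B / A)) :=
        mul_le_mul_of_nonneg_left h1 (by positivity)
      have e3 : (A * A ^ q) * (q * (1 - B / A)) = q * (A ^ q * (A - B)) := by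
        field_simp
      have e4 : A * (A ^ q - B ^ q) = (A * A ^ q) * (1 - (B / A) ^ q) := by
        rw [hfb]; ring
      rw [e4, ← e3]; exact h2
  have hnn : 0 ≤ A ^ q * (A - B) := mul_nonneg hfa_pos.le (by linarith)
  rcases hstep with h | h
  · nlinarith
  · nlinarith

lemma core_pos (q : ℝ) (hq : 0 < q) : ∃ c₀ > (0:ℝ), ∃ C₀ > (0:ℝ),
    ∀ A B a b t : ℝ, 0 ≤ b → b ≤ a → a ≤ A → 0 < A → b ≤ B → B ≤ A → A - a = B - b →
      a - b ≤ t → t ≤ a + b →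
      c₀ * (A ^ q) ^ 2 * t ^ 2 ≤
          A ^ q * B ^ q * t ^ 2 + (A ^ q - B ^ q) * (A ^ q * a ^ 2 - B ^ q * b ^ 2) ∧
        A ^ q * B ^ q * t ^ 2 + (A ^ q - B ^ q) * (A ^ q * a ^ 2 - B ^ q * b ^ 2) ≤
          C₀ * (A ^ q) ^ 2 * t ^ 2 := by
  have hK1 : 1 ≤ max q 1 := le_max_right _ _
  have hKq : q ≤ max q 1 := le_max_left _ _
  have hK0 : 0 < max q 1 := by linarith
  have hβ0 : 0 < (2:ℝ) ^ (-q) := rpow_pos_of_pos two_pos _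
  have hβ1 : (2:ℝ) ^ (-q) < 1 := rpow_lt_one_of_one_lt_of_neg one_lt_two (by linarith)
  refine ⟨min ((2:ℝ)^(-q)) ((1 - (2:ℝ)^(-q)) ^ 2 / 16),
    lt_min hβ0 (div_pos (pow_pos (by linarith) 2) (by norm_num)),
    1 + (max q 1) * (2 + max q 1), by positivity, ?_⟩
  intro A B a b t hb0 hba haA hA hbB hBA hκe ht1 ht2
  have ha0 : 0 ≤ a := hb0.trans hba
  have ht0 : 0 ≤ t := le_trans (by linarith) ht1
  have hB0 : 0 ≤ B := hb0.trans hbB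
  have hABab : A - B = a - b := by linarith
  have hfa_pos : 0 < A ^ q := rpow_pos_of_pos hA q
  have hfb0 : 0 ≤ B ^ q := rpow_nonneg hB0 q
  have hfba : B ^ q ≤ A ^ q := rpow_le_rpow hB0 hBA hq.le
  have hg : B ^ q * b ^ 2 ≤ A ^ q * a ^ 2 :=
    mul_le_mul hfba (pow_le_pow_left₀ hb0 hba 2) (sq_nonneg b) hfa_pos.le
  have hu2 : A * (A ^ q - B ^ q) ≤ (max q 1) * (A ^ q * (A - B)) := diff_rpow_le q hq hA hB0 hBA
  have hAB_t : A - B ≤ t := by linarith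
  have hhalf : (A / 2) ^ q = A ^ q * (2:ℝ)^(-q) := by
    rw [div_rpow hA.le (by norm_num : (0:ℝ) ≤ 2), rpow_neg (by norm_num : (0:ℝ) ≤ 2)]
    field_simp
  constructor
  · -- LOWER BOUND
    have hsecond : 0 ≤ (A ^ q - B ^ q) * (A ^ q * a ^ 2 - B ^ q * b ^ 2) :=
      mul_nonneg (by linarith only [hfba]) (by linarith only [hg])
    have hmin1 : min ((2:ℝ)^(-q)) ((1 - (2:ℝ)^(-q)) ^ 2 / 16) ≤ (2:ℝ)^(-q) := min_le_left _ _
    have hmin2 : min ((2:ℝ)^(-q)) ((1 - (2:ℝ)^(-q)) ^ 2 / 16) ≤ (1 - (2:ℝ)^(-q)) ^ 2 / 16 :=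
      min_le_right _ _
    rcases le_or_gt (A / 2) B with hB2 | hB2
    · have hfb_ge : A ^ q * (2:ℝ)^(-q) ≤ B ^ q := by
        rw [← hhalf]; exact rpow_le_rpow (by positivity) hB2 hq.le
      have h1 : A ^ q * (A ^ q * (2:ℝ)^(-q)) * t ^ 2 ≤ A ^ q * B ^ q * t ^ 2 :=
        mul_le_mul_of_nonneg_right (mul_le_mul_of_nonneg_left hfb_ge hfa_pos.le) (sq_nonneg t)
      have hminprod : min ((2:ℝ)^(-q)) ((1 - (2:ℝ)^(-q)) ^ 2 / 16) * (A ^ q) ^ 2 * t ^ 2 ≤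
          (2:ℝ)^(-q) * (A ^ q) ^ 2 * t ^ 2 :=
        mul_le_mul_of_nonneg_right (mul_le_mul_of_nonneg_right hmin1 (sq_nonneg _)) (sq_nonneg t)
      linarith only [hsecond, h1, hminprod]
    · have haA2 : A / 2 < a := by linarith
      have hbhalf : b ≤ A / 2 := by linarith
      have ht2A : t ≤ 2 * A := by linarith
      have hfb2 : B ^ q ≤ A ^ q * (2:ℝ)^(-q) := by
        rw [← hhalf]; exact rpow_le_rpow hB0 (by linarith) hq.le
      have l1 : A ^ q * (1 - (2:ℝ)^(-q)) ≤ A ^ q - B ^ q := by linarith only [hfb2]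
      have hA2a : (A/2) * (A/2) ≤ a * a := mul_le_mul haA2.le haA2.le (by linarith) ha0
      have e1 : A ^ q * (A ^ 2 / 4) ≤ A ^ q * a ^ 2 :=
        mul_le_mul_of_nonneg_left (by linarith only [hA2a]) hfa_pos.le
      have hb2 : b * b ≤ (A/2) * (A/2) := mul_le_mul hbhalf hbhalf hb0 (by linarith)
      have e2 : B ^ q * b ^ 2 ≤ (A ^ q * (2:ℝ)^(-q)) * (A ^ 2 / 4) :=
        mul_le_mul hfb2 (by linarith only [hb2]) (sq_nonneg b) (by positivity)
      have l2 : A ^ q * (1 - (2:ℝ)^(-q)) * (A ^ 2 / 4) ≤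
          A ^ q * a ^ 2 - B ^ q * b ^ 2 := by linarith only [e1, e2]
      have l3 : (A ^ q * (1 - (2:ℝ)^(-q))) * (A ^ q * (1 - (2:ℝ)^(-q)) * (A ^ 2 / 4)) ≤
          (A ^ q - B ^ q) * (A ^ q * a ^ 2 - B ^ q * b ^ 2) :=
        mul_le_mul l1 l2
          (mul_nonneg (mul_nonneg hfa_pos.le (by linarith)) (by positivity))
          (by linarith only [hfba])
      have ht4 : t * t ≤ (2*A) * (2*A) := mul_le_mul ht2A ht2A ht0 (by linarith)
      have l4 : ((1 - (2:ℝ)^(-q)) ^ 2 / 16) * (A ^ q) ^ 2 * t ^ 2 ≤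
          (A ^ q * (1 - (2:ℝ)^(-q))) * (A ^ q * (1 - (2:ℝ)^(-q)) * (A ^ 2 / 4)) := by
        have h := mul_nonneg (sq_nonneg (A ^ q * (1 - (2:ℝ)^(-q))))
          (by linarith only [ht4] : (0:ℝ) ≤ 4 * A ^ 2 - t ^ 2)
        linarith only [h]
      have hminprod : min ((2:ℝ)^(-q)) ((1 - (2:ℝ)^(-q)) ^ 2 / 16) * (A ^ q) ^ 2 * t ^ 2 ≤
          ((1 - (2:ℝ)^(-q)) ^ 2 / 16) * (A ^ q) ^ 2 * t ^ 2 :=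
        mul_le_mul_of_nonneg_right (mul_le_mul_of_nonneg_right hmin2 (sq_nonneg _)) (sq_nonneg t)
      have hfirst : 0 ≤ A ^ q * B ^ q * t ^ 2 :=
        mul_nonneg (mul_nonneg hfa_pos.le hfb0) (sq_nonneg t)
      linarith only [hfirst, l3, l4, hminprod]
  · -- UPPER BOUND
    have hfirst : A ^ q * B ^ q * t ^ 2 ≤ (A ^ q) ^ 2 * t ^ 2 := by
      have h := mul_le_mul_of_nonneg_right
        (mul_le_mul_of_nonneg_left hfba hfa_pos.le) (sq_nonneg t)
      linarith only [h]
    have hu2' : A * (A ^ q - B ^ q) ≤ (max q 1) * (A ^ q * t) := by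
      have h := mul_le_mul_of_nonneg_left (mul_le_mul_of_nonneg_left hAB_t hfa_pos.le) hK0.le
      linarith only [h, hu2]
    have i1 : (a + b) * (a - b) ≤ (2 * A) * t :=
      mul_le_mul (by linarith) ht1 (by linarith) (by linarith)
    have i1' : A ^ q * (A * (a ^ 2 - b ^ 2)) ≤ A ^ q * (A * ((2 * A) * t)) := by
      apply mul_le_mul_of_nonneg_left _ hfa_pos.le
      apply mul_le_mul_of_nonneg_left _ hA.le
      linarith only [i1]
    have i2' : (A * (A ^ q - B ^ q)) * b ^ 2 ≤ ((max q 1) * (A ^ q * (A - B))) * b ^ 2 :=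
      mul_le_mul_of_nonneg_right hu2 (sq_nonneg b)
    have hb2A : b * b ≤ A * A := mul_le_mul (by linarith) (by linarith) hb0 hA.le
    have h5 : (A - B) * b ^ 2 ≤ t * A ^ 2 :=
      mul_le_mul hAB_t (by linarith only [hb2A]) (sq_nonneg b) ht0
    have i3 : (A ^ q * (A - B)) * b ^ 2 ≤ A ^ q * (t * A ^ 2) := by
      have h := mul_le_mul_of_nonneg_left h5 hfa_pos.le
      linarith only [h]
    have i3' : (max q 1) * ((A ^ q * (A - B)) * b ^ 2) ≤ (max q 1) * (A ^ q * (t * A ^ 2)) :=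
      mul_le_mul_of_nonneg_left i3 hK0.le
    have hu3 : A * (A ^ q * a ^ 2 - B ^ q * b ^ 2) ≤
        (2 + max q 1) * (A ^ q * (A ^ 2 * t)) := by linarith only [i1', i2', i3']
    have hP : (A ^ q - B ^ q) * (A ^ q * a ^ 2 - B ^ q * b ^ 2) ≤
        (max q 1) * (2 + max q 1) * ((A ^ q) ^ 2 * t ^ 2) := by
      have h2 : 0 ≤ A * (A ^ q * a ^ 2 - B ^ q * b ^ 2) :=
        mul_nonneg hA.le (by linarith only [hg])
      have hprod : (A * (A ^ q - B ^ q)) * (A * (A ^ q * a ^ 2 - B ^ q * b ^ 2)) ≤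
          ((max q 1) * (A ^ q * t)) * ((2 + max q 1) * (A ^ q * (A ^ 2 * t))) :=
        mul_le_mul hu2' hu3 h2 (by positivity)
      have h' : A ^ 2 * ((A ^ q - B ^ q) * (A ^ q * a ^ 2 - B ^ q * b ^ 2)) ≤
          A ^ 2 * ((max q 1) * (2 + max q 1) * ((A ^ q) ^ 2 * t ^ 2)) := by
        calc A ^ 2 * ((A ^ q - B ^ q) * (A ^ q * a ^ 2 - B ^ q * b ^ 2))
            = (A * (A ^ q - B ^ q)) * (A * (A ^ q * a ^ 2 - B ^ q * b ^ 2)) := by ring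
          _ ≤ ((max q 1) * (A ^ q * t)) * ((2 + max q 1) * (A ^ q * (A ^ 2 * t))) := hprod
          _ = A ^ 2 * ((max q 1) * (2 + max q 1) * ((A ^ q) ^ 2 * t ^ 2)) := by ring
      exact le_of_mul_le_mul_left h' (by positivity)
    linarith only [hfirst, hP]

-- Algebraic core for the case q < 0, B > 0 (z = (B/A)^q ≥ 1, fb = z * fa).
lemma coreneg_alg (ε γ z fa y A B a b t : ℝ)
    (hfa : 0 < fa) (hz1 : 1 ≤ z)
    (hy0 : 0 < y) (hy1 : y ≤ 1) (hBy : B = y * A)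
    (hzy : z * y ≤ 1)
    (hb0 : 0 ≤ b) (hba : b ≤ a) (haA : a ≤ A) (hA : 0 < A) (hbB : b ≤ B)
    (hABab : A - B = a - b) (ht1 : a - b ≤ t) (ht2 : t ≤ a + b)
    (hε0 : 0 < ε) (hε1 : ε ≤ 1) (hbern : ε * (1 - y) ≤ 1 - z * y)
    (hγ : 0 < γ) (hcase : z ≤ γ ∨ y < 1/2) :
    ε ^ 2 * fa ^ 2 * t ^ 2 ≤
        fa * (z * fa) * t ^ 2 + (fa - z * fa) * (fa * a ^ 2 - z * fa * b ^ 2) ∧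
      fa * (z * fa) * t ^ 2 + (fa - z * fa) * (fa * a ^ 2 - z * fa * b ^ 2) ≤
        (γ + 16) * fa ^ 2 * t ^ 2 := by
  have ha0 : 0 ≤ a := hb0.trans hba
  have ht0 : 0 ≤ t := le_trans (by linarith) ht1
  have hz0 : 0 < z := by linarith
  have hby : b * A ≤ a * B :=  by
    have hBe : B = A - (a - b) := by linarith
    have e : a * B = a * A - a * (a - b) := by rw [hBe]; ring
    linarith only [mul_nonneg (sub_nonneg.mpr haA) (sub_nonneg.mpr hba), e]
  have hbya : b ≤ y * a := by
    have h : b * A ≤ (y * a) * A := by rw [hBy] at hby; linarith only [hby]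
    exact le_of_mul_le_mul_right h hA
  have hzb : z * b ≤ a := by
    have h1 : z * b ≤ z * (y * a) := mul_le_mul_of_nonneg_left hbya hz0.le
    have h2 : (z * y) * a ≤ 1 * a := mul_le_mul_of_nonneg_right hzy ha0
    linarith only [h1, h2]
  have hzB : z * B ≤ A := by
    have h2 : (z * y) * A ≤ 1 * A := mul_le_mul_of_nonneg_right hzy hA.le
    rw [hBy]; linarith only [h2]
  constructor
  · -- LOWER BOUND
    have hk0 : 0 ≤ A - a := by linarith
    have hBb : B - b = A - a := by linarith
    have hz_sum : z * (B + b) ≤ A + a := by linarith only [hzb, hzB]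
    have hκm : a ^ 2 - z * b ^ 2 ≤ A ^ 2 - z * B ^ 2 := by
      have h1 : (A - a) * (z * (B + b)) ≤ (A - a) * (A + a) :=
        mul_le_mul_of_nonneg_left hz_sum hk0
      have h1' : (B - b) * (z * (B + b)) ≤ (A - a) * (A + a) := by rw [hBb]; exact h1
      linarith only [h1']
    have hmono : (1 - z) * (A ^ 2 - z * B ^ 2) ≤ (1 - z) * (a ^ 2 - z * b ^ 2) :=
      mul_le_mul_of_nonpos_left hκm (by linarith)
    have hS : (z - 1) * (1 - z * y ^ 2) ≤ (z - ε ^ 2) * (1 - y) ^ 2 := by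
      have hnn : 0 ≤ ε * (1 - y) := mul_nonneg hε0.le (by linarith)
      have hsq : (ε * (1 - y)) ^ 2 ≤ (1 - z * y) ^ 2 := pow_le_pow_left₀ hnn hbern 2
      linarith only [hsq]
    have hsub : (1 - z) * (A ^ 2 - z * B ^ 2) = A ^ 2 * ((1 - z) * (1 - z * y ^ 2)) := by
      rw [hBy]; ring
    have htlin : A * (1 - y) ≤ t := by
      have e : A * (1 - y) = A - B := by rw [hBy]; ring
      linarith only [e, hABab, ht1]
    have htsq : A ^ 2 * (1 - y) ^ 2 ≤ t ^ 2 := by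
      have h := pow_le_pow_left₀ (mul_nonneg hA.le (by linarith : (0:ℝ) ≤ 1 - y)) htlin 2
      linarith only [h]
    have hzε : 0 ≤ z - ε ^ 2 := by
      have h : ε * ε ≤ 1 * 1 := mul_le_mul hε1 hε1 hε0.le zero_le_one
      linarith only [h, hz1]
    have step1 : A ^ 2 * ((z - 1) * (1 - z * y ^ 2)) ≤ A ^ 2 * ((z - ε ^ 2) * (1 - y) ^ 2) :=
      mul_le_mul_of_nonneg_left hS (sq_nonneg A)
    have step2 : (z - ε ^ 2) * (A ^ 2 * (1 - y) ^ 2) ≤ (z - ε ^ 2) * t ^ 2 :=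
      mul_le_mul_of_nonneg_left htsq hzε
    have hinner : ε ^ 2 * t ^ 2 ≤ z * t ^ 2 + (1 - z) * (a ^ 2 - z * b ^ 2) := by
      linarith only [hmono, hsub, step1, step2]
    have hfin : fa ^ 2 * (ε ^ 2 * t ^ 2) ≤
        fa ^ 2 * (z * t ^ 2 + (1 - z) * (a ^ 2 - z * b ^ 2)) :=
      mul_le_mul_of_nonneg_left hinner (sq_nonneg fa)
    linarith only [hfin]
  · -- UPPER BOUND
    rcases hcase with hzγ | hy2
    · have hzb2 : z * b ^ 2 ≤ a ^ 2 := by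
        have h1 : (z * b) * b ≤ a * b := mul_le_mul_of_nonneg_right hzb hb0
        have h2 : a * b ≤ a * a := mul_le_mul_of_nonneg_left hba ha0
        linarith only [h1, h2]
      have hP : (fa - z * fa) * (fa * a ^ 2 - z * fa * b ^ 2) ≤ 0 := by
        apply mul_nonpos_of_nonpos_of_nonneg
        · linarith only [mul_nonneg (by linarith : (0:ℝ) ≤ z - 1) hfa.le]
        · linarith only [mul_le_mul_of_nonneg_left hzb2 hfa.le]
      have h1 : fa * (z * fa) * t ^ 2 ≤ γ * fa ^ 2 * t ^ 2 := by
        have h := mul_le_mul_of_nonneg_right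
          (mul_le_mul_of_nonneg_right hzγ (sq_nonneg fa)) (sq_nonneg t)
        linarith only [h]
      linarith only [hP, h1, mul_nonneg (sq_nonneg fa) (sq_nonneg t)]
    · have htA : A ≤ 2 * t := by
        have h : 0 ≤ A * (1/2 - y) := mul_nonneg hA.le (by linarith)
        have e : A * (1 - y) = A - B := by rw [hBy]; ring
        linarith only [h, e, hABab, ht1]
      have hab2 : t ^ 2 ≤ (a + b) ^ 2 := pow_le_pow_left₀ ht0 ht2 2
      have s1 : z * (-(2 * (a * b))) ≤ z * (a ^ 2 + b ^ 2 - t ^ 2) :=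
        mul_le_mul_of_nonneg_left (by linarith only [hab2]) hz0.le
      have s2 : (a + z * b) ^ 2 ≤ (2 * a) ^ 2 :=
        pow_le_pow_left₀ (by positivity) (by linarith only [hzb]) 2
      have s3 : (2 * a) ^ 2 ≤ 16 * t ^ 2 := by
        have h : a ≤ 2 * t := by linarith
        linarith only [mul_self_le_mul_self ha0 h]
      have hinner2 : a ^ 2 + z ^ 2 * b ^ 2 - z * (a ^ 2 + b ^ 2 - t ^ 2) ≤ 16 * t ^ 2 := by
        linarith only [s1, s2, s3]
      have hfin : fa ^ 2 * (a ^ 2 + z ^ 2 * b ^ 2 - z * (a ^ 2 + b ^ 2 - t ^ 2)) ≤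
          fa ^ 2 * (16 * t ^ 2) := mul_le_mul_of_nonneg_left hinner2 (sq_nonneg fa)
      linarith only [hfin, mul_nonneg (mul_nonneg hγ.le (sq_nonneg fa)) (sq_nonneg t)]

lemma bern_lower {y m : ℝ} (hy0 : 0 ≤ y) (hm0 : 0 ≤ m) (hm1 : m ≤ 1) :
    m * (1 - y) ≤ 1 - y ^ m := by
  have h := rpow_one_add_le_one_add_mul_self (s := y - 1) (by linarith) hm0 hm1
  have e : (1 + (y - 1)) = y := by ring
  rw [e] at h; linarith

lemma core_neg (q : ℝ) (hq0 : q < 0) (hq1 : -1 < q) : ∃ c₀ > (0:ℝ), ∃ C₀ > (0:ℝ),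
    ∀ A B a b t : ℝ, 0 ≤ b → b ≤ a → a ≤ A → 0 < A → b ≤ B → B ≤ A → A - a = B - b →
      a - b ≤ t → t ≤ a + b →
      c₀ * (A ^ q) ^ 2 * t ^ 2 ≤
          A ^ q * B ^ q * t ^ 2 + (A ^ q - B ^ q) * (A ^ q * a ^ 2 - B ^ q * b ^ 2) ∧
        A ^ q * B ^ q * t ^ 2 + (A ^ q - B ^ q) * (A ^ q * a ^ 2 - B ^ q * b ^ 2) ≤
          C₀ * (A ^ q) ^ 2 * t ^ 2 := by
  have hγ : 0 < (2:ℝ) ^ (-q) := rpow_pos_of_pos two_pos _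
  refine ⟨(1+q)^2, pow_pos (by linarith) 2, (2:ℝ)^(-q) + 16, by positivity, ?_⟩
  intro A B a b t hb0 hba haA hA hbB hBA hκe ht1 ht2
  have ha0 : 0 ≤ a := hb0.trans hba
  have ht0 : 0 ≤ t := le_trans (by linarith) ht1
  have hB0 : 0 ≤ B := hb0.trans hbB
  have hABab : A - B = a - b := by linarith
  have hfa_pos : 0 < A ^ q := rpow_pos_of_pos hA q
  have hq1' : (1+q)*(1+q) ≤ 1*1 := by nlinarith
  rcases eq_or_lt_of_le hB0 with hB | hB
  · -- B = 0 : then b = 0 and t = a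
    have hbz : b = 0 := le_antisymm (by linarith) hb0
    have hta : t = a := le_antisymm (by linarith) (by linarith)
    rw [← hB, zero_rpow hq0.ne, hbz, hta]
    constructor
    · have h := mul_le_mul_of_nonneg_right
        (mul_le_mul_of_nonneg_right hq1' (sq_nonneg (A ^ q))) (sq_nonneg a)
      linarith only [h]
    · have h16 : (1:ℝ) ≤ (2:ℝ)^(-q) + 16 := by linarith
      have h := mul_le_mul_of_nonneg_right
        (mul_le_mul_of_nonneg_right h16 (sq_nonneg (A ^ q))) (sq_nonneg a)
      linarith only [h]
  · -- B > 0
    have hy0 : 0 < B / A := div_pos hB hA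
    have hy1 : B / A ≤ 1 := (div_le_one hA).mpr hBA
    have hBy : B = (B / A) * A := (div_mul_cancel₀ B hA.ne').symm
    have hz1 : 1 ≤ (B / A) ^ q := one_le_rpow_of_pos_of_le_one_of_nonpos hy0 hy1 hq0.le
    have hfbz : B ^ q = (B / A) ^ q * A ^ q := by
      rw [← mul_rpow hy0.le hA.le, div_mul_cancel₀ B hA.ne']
    have he : (B / A) ^ (q + 1) = (B / A) ^ q * (B / A) := rpow_add_one hy0.ne' q
    have hzy : (B / A) ^ q * (B / A) ≤ 1 := by
      rw [← he]; exact rpow_le_one hy0.le hy1 (by linarith)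
    have hbern : (1 + q) * (1 - B / A) ≤ 1 - (B / A) ^ q * (B / A) := by
      have h := bern_lower (y := B / A) (m := q + 1) hy0.le (by linarith) (by linarith)
      rw [he] at h; linarith
    have hcase : (B / A) ^ q ≤ (2:ℝ)^(-q) ∨ B / A < 1/2 := by
      rcases le_or_gt (1/2 : ℝ) (B / A) with h | h
      · left
        have h2 := rpow_le_rpow_of_nonpos (by norm_num : (0:ℝ) < 1/2) h hq0.le
        have e : ((1:ℝ)/2) ^ q = (2:ℝ)^(-q) := by
          rw [one_div, inv_rpow (by norm_num : (0:ℝ) ≤ 2), ← rpow_neg (by norm_num : (0:ℝ) ≤ 2)]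
        rwa [e] at h2
      · right; exact h
    have halg := coreneg_alg (1+q) ((2:ℝ)^(-q)) ((B / A) ^ q) (A ^ q) (B / A) A B a b t
      hfa_pos hz1 hy0 hy1 hBy hzy hb0 hba haA hA hbB hABab ht1 ht2
      (by linarith) (by linarith) hbern hγ hcase
    rw [hfbz]
    exact halg

lemma core (q : ℝ) (hq : -1 < q) : ∃ c₀ > (0:ℝ), ∃ C₀ > (0:ℝ),
    ∀ A B a b t : ℝ, 0 ≤ b → b ≤ a → a ≤ A → 0 < A → b ≤ B → B ≤ A → A - a = B - b →
      a - b ≤ t → t ≤ a + b →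
      c₀ * (A ^ q) ^ 2 * t ^ 2 ≤
          A ^ q * B ^ q * t ^ 2 + (A ^ q - B ^ q) * (A ^ q * a ^ 2 - B ^ q * b ^ 2) ∧
        A ^ q * B ^ q * t ^ 2 + (A ^ q - B ^ q) * (A ^ q * a ^ 2 - B ^ q * b ^ 2) ≤
          C₀ * (A ^ q) ^ 2 * t ^ 2 := by
  rcases lt_trichotomy q 0 with h | h | h
  · exact core_neg q h hq
  · subst h
    refine ⟨1, one_pos, 1, one_pos, ?_⟩
    intro A B a b t hb0 hba haA hA hbB hBA hκe ht1 ht2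
    simp only [rpow_zero]
    constructor <;> nlinarith [sq_nonneg t]
  · exact core_pos q h

lemma V_ident (n N : ℕ) (p κ : ℝ) (hκ : 0 ≤ κ) (ξ₁ ξ₂ : EuclideanSpace ℝ (Fin n × Fin N)) :
    ‖Vop n N p κ ξ₁ - Vop n N p κ ξ₂‖ ^ 2 =
      (κ + ‖ξ₁‖) ^ ((p-2)/2) * (κ + ‖ξ₂‖) ^ ((p-2)/2) * ‖ξ₁ - ξ₂‖ ^ 2
        + ((κ + ‖ξ₁‖) ^ ((p-2)/2) - (κ + ‖ξ₂‖) ^ ((p-2)/2)) *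
          ((κ + ‖ξ₁‖) ^ ((p-2)/2) * ‖ξ₁‖ ^ 2 - (κ + ‖ξ₂‖) ^ ((p-2)/2) * ‖ξ₂‖ ^ 2) := by
  have hfa : 0 ≤ (κ + ‖ξ₁‖) ^ ((p-2)/2) := rpow_nonneg (by positivity) _
  have hfb : 0 ≤ (κ + ‖ξ₂‖) ^ ((p-2)/2) := rpow_nonneg (by positivity) _
  have h1 := norm_sub_sq_real (Vop n N p κ ξ₁) (Vop n N p κ ξ₂)
  have h2 := norm_sub_sq_real ξ₁ ξ₂
  unfold Vop at h1
  rw [norm_smul, norm_smul, real_inner_smul_left, real_inner_smul_right,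
    Real.norm_eq_abs, Real.norm_eq_abs, abs_of_nonneg hfa, abs_of_nonneg hfb] at h1
  unfold Vop
  rw [h1, h2]
  ring

lemma bridge {M T : ℝ} (r : ℝ) (hM : 0 < M) (hMT : M ≤ T) (hTM : T ≤ 3*M) :
    T ^ r ≤ 3 ^ |r| * M ^ r ∧ M ^ r ≤ 3 ^ |r| * T ^ r := by
  have hT : 0 < T := lt_of_lt_of_le hM hMT
  rcases le_or_gt 0 r with hr | hr
  · rw [abs_of_nonneg hr]
    have h2 : (1:ℝ) ≤ 3 ^ r := by
      have h := rpow_le_rpow_of_exponent_le (by norm_num : (1:ℝ) ≤ 3) hr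
      rwa [rpow_zero] at h
    constructor
    · calc T ^ r ≤ (3*M) ^ r := rpow_le_rpow hT.le hTM hr
        _ = 3 ^ r * M ^ r := mul_rpow (by norm_num) hM.le
    · have h1 : M ^ r ≤ T ^ r := rpow_le_rpow hM.le hMT hr
      have h3 : T ^ r ≤ 3 ^ r * T ^ r := le_mul_of_one_le_left (rpow_nonneg hT.le r) h2
      linarith
  · rw [abs_of_neg hr]
    have h2 : (1:ℝ) ≤ 3 ^ (-r) := by
      have h := rpow_le_rpow_of_exponent_le (by norm_num : (1:ℝ) ≤ 3) (by linarith : (0:ℝ) ≤ -r)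
      rwa [rpow_zero] at h
    constructor
    · have h1 : T ^ r ≤ M ^ r := rpow_le_rpow_of_nonpos hM hMT hr.le
      have h3 : M ^ r ≤ 3 ^ (-r) * M ^ r := le_mul_of_one_le_left (rpow_nonneg hM.le r) h2
      linarith
    · have h3 : (3*M) ^ r ≤ T ^ r := rpow_le_rpow_of_nonpos hT hTM hr.le
      have e : (3*M) ^ r = 3 ^ r * M ^ r := mul_rpow (by norm_num) hM.le
      have e2 : (3:ℝ) ^ (-r) * 3 ^ r = 1 := by
        rw [← rpow_add (by norm_num : (0:ℝ) < 3)]; norm_num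
      have h4 : 3 ^ (-r) * ((3*M) ^ r) ≤ 3 ^ (-r) * T ^ r :=
        mul_le_mul_of_nonneg_left h3 (rpow_nonneg (by norm_num) _)
      calc M ^ r = (3 ^ (-r) * 3 ^ r) * M ^ r := by rw [e2]; ring
        _ = 3 ^ (-r) * ((3*M) ^ r) := by rw [e]; ring
        _ ≤ 3 ^ (-r) * T ^ r := h4

/-- There are constants `c, C > 0` depending only on `p` (and `n, N`) such that for all
`κ ≥ 0` and all matrices `ξ₁, ξ₂`,
`c (κ + |ξ₁| + |ξ₁ - ξ₂|)^(p-2) |ξ₁ - ξ₂|² ≤ |V(ξ₁) - V(ξ₂)|²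
  ≤ C (κ + |ξ₁| + |ξ₁ - ξ₂|)^(p-2) |ξ₁ - ξ₂|²`
(for `κ = 0`, `ξ₁ = ξ₂ = 0` the middle expression is `0`, as is automatic for `rpow`). -/
theorem V_equivalence (n N : ℕ) (hn : 1 ≤ n) (hN : 1 ≤ N) (p : ℝ) (hp : 1 < p) :
    ∃ c > (0 : ℝ), ∃ C > (0 : ℝ),
      ∀ κ : ℝ, 0 ≤ κ →
        ∀ ξ₁ ξ₂ : EuclideanSpace ℝ (Fin n × Fin N),
          c * ((κ + ‖ξ₁‖ + ‖ξ₁ - ξ₂‖) ^ (p - 2) * ‖ξ₁ - ξ₂‖ ^ 2)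
              ≤ ‖Vop n N p κ ξ₁ - Vop n N p κ ξ₂‖ ^ 2 ∧
          ‖Vop n N p κ ξ₁ - Vop n N p κ ξ₂‖ ^ 2
              ≤ C * ((κ + ‖ξ₁‖ + ‖ξ₁ - ξ₂‖) ^ (p - 2) * ‖ξ₁ - ξ₂‖ ^ 2) := by
  obtain ⟨c₀, hc₀, C₀, hC₀, hcore⟩ := core ((p-2)/2) (by linarith)
  have hm0 : 0 < (3:ℝ) ^ |p-2| := rpow_pos_of_pos (by norm_num) _
  refine ⟨c₀ / (3:ℝ) ^ |p-2|, by positivity, C₀ * (3:ℝ) ^ |p-2|, by positivity, ?_⟩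
  intro κ hκ ξ₁ ξ₂
  by_cases hξ : ξ₁ = ξ₂
  · subst hξ
    simp
  · have htpos : 0 < ‖ξ₁ - ξ₂‖ := by
      rw [norm_pos_iff]; exact sub_ne_zero.mpr hξ
    have htri1 : ‖ξ₁‖ - ‖ξ₂‖ ≤ ‖ξ₁ - ξ₂‖ := norm_sub_norm_le _ _
    have htri1' : ‖ξ₂‖ - ‖ξ₁‖ ≤ ‖ξ₁ - ξ₂‖ := by
      have h := norm_sub_norm_le ξ₂ ξ₁
      rwa [norm_sub_rev] at h
    have htri2 : ‖ξ₁ - ξ₂‖ ≤ ‖ξ₁‖ + ‖ξ₂‖ := norm_sub_le _ _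
    have hn1 : 0 ≤ ‖ξ₁‖ := norm_nonneg _
    have hn2 : 0 ≤ ‖ξ₂‖ := norm_nonneg _
    rcases le_total ‖ξ₂‖ ‖ξ₁‖ with hord | hord
    · -- ‖ξ₁‖ is the max
      have hA : 0 < κ + ‖ξ₁‖ := by linarith
      have hcore' := hcore (κ + ‖ξ₁‖) (κ + ‖ξ₂‖) ‖ξ₁‖ ‖ξ₂‖ ‖ξ₁ - ξ₂‖ hn2 hord
        (by linarith) hA (by linarith) (by linarith) (by ring) htri1 htri2
      have hE := V_ident n N p κ hκ ξ₁ ξ₂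
      rw [← hE] at hcore'
      have hMT : κ + ‖ξ₁‖ ≤ κ + ‖ξ₁‖ + ‖ξ₁ - ξ₂‖ := by linarith
      have hTM : κ + ‖ξ₁‖ + ‖ξ₁ - ξ₂‖ ≤ 3 * (κ + ‖ξ₁‖) := by linarith
      obtain ⟨hb1, hb2⟩ := bridge (p-2) hA hMT hTM
      have hMsq : (κ + ‖ξ₁‖) ^ (p-2) = ((κ + ‖ξ₁‖) ^ ((p-2)/2)) ^ 2 := by
        rw [← Real.rpow_natCast ((κ + ‖ξ₁‖) ^ ((p-2)/2)) 2, ← Real.rpow_mul hA.le]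
        norm_num
      constructor
      · calc c₀ / (3:ℝ) ^ |p-2| * ((κ + ‖ξ₁‖ + ‖ξ₁ - ξ₂‖) ^ (p-2) * ‖ξ₁ - ξ₂‖ ^ 2)
            ≤ c₀ / (3:ℝ) ^ |p-2| * ((3 ^ |p-2| * (κ + ‖ξ₁‖) ^ (p-2)) * ‖ξ₁ - ξ₂‖ ^ 2) := by
              apply mul_le_mul_of_nonneg_left
                (mul_le_mul_of_nonneg_right hb1 (sq_nonneg _)) (by positivity)
          _ = c₀ * ((κ + ‖ξ₁‖) ^ ((p-2)/2)) ^ 2 * ‖ξ₁ - ξ₂‖ ^ 2 := by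
              rw [← hMsq]; field_simp
          _ ≤ ‖Vop n N p κ ξ₁ - Vop n N p κ ξ₂‖ ^ 2 := hcore'.1
      · calc ‖Vop n N p κ ξ₁ - Vop n N p κ ξ₂‖ ^ 2
            ≤ C₀ * ((κ + ‖ξ₁‖) ^ ((p-2)/2)) ^ 2 * ‖ξ₁ - ξ₂‖ ^ 2 := hcore'.2
          _ = C₀ * ((κ + ‖ξ₁‖) ^ (p-2) * ‖ξ₁ - ξ₂‖ ^ 2) := by rw [hMsq]; ring
          _ ≤ C₀ * (((3:ℝ) ^ |p-2| * (κ + ‖ξ₁‖ + ‖ξ₁ - ξ₂‖) ^ (p-2)) * ‖ξ₁ - ξ₂‖ ^ 2) := by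
              apply mul_le_mul_of_nonneg_left
                (mul_le_mul_of_nonneg_right hb2 (sq_nonneg _)) hC₀.le
          _ = C₀ * (3:ℝ) ^ |p-2| * ((κ + ‖ξ₁‖ + ‖ξ₁ - ξ₂‖) ^ (p-2) * ‖ξ₁ - ξ₂‖ ^ 2) := by
              ring
    · -- ‖ξ₂‖ is the max
      have hA : 0 < κ + ‖ξ₂‖ := by linarith
      have hcore' := hcore (κ + ‖ξ₂‖) (κ + ‖ξ₁‖) ‖ξ₂‖ ‖ξ₁‖ ‖ξ₁ - ξ₂‖ hn1 hord
        (by linarith) hA (by linarith) (by linarith) (by ring) htri1' (by linarith)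
      have hE := V_ident n N p κ hκ ξ₂ ξ₁
      rw [norm_sub_rev (Vop n N p κ ξ₂), norm_sub_rev ξ₂] at hE
      rw [← hE] at hcore'
      have hMT : κ + ‖ξ₂‖ ≤ κ + ‖ξ₁‖ + ‖ξ₁ - ξ₂‖ := by linarith
      have hTM : κ + ‖ξ₁‖ + ‖ξ₁ - ξ₂‖ ≤ 3 * (κ + ‖ξ₂‖) := by linarith
      obtain ⟨hb1, hb2⟩ := bridge (p-2) hA hMT hTM
      have hMsq : (κ + ‖ξ₂‖) ^ (p-2) = ((κ + ‖ξ₂‖) ^ ((p-2)/2)) ^ 2 := by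
        rw [← Real.rpow_natCast ((κ + ‖ξ₂‖) ^ ((p-2)/2)) 2, ← Real.rpow_mul hA.le]
        norm_num
      constructor
      · calc c₀ / (3:ℝ) ^ |p-2| * ((κ + ‖ξ₁‖ + ‖ξ₁ - ξ₂‖) ^ (p-2) * ‖ξ₁ - ξ₂‖ ^ 2)
            ≤ c₀ / (3:ℝ) ^ |p-2| * ((3 ^ |p-2| * (κ + ‖ξ₂‖) ^ (p-2)) * ‖ξ₁ - ξ₂‖ ^ 2) := by
              apply mul_le_mul_of_nonneg_left
                (mul_le_mul_of_nonneg_right hb1 (sq_nonneg _)) (by positivity)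
          _ = c₀ * ((κ + ‖ξ₂‖) ^ ((p-2)/2)) ^ 2 * ‖ξ₁ - ξ₂‖ ^ 2 := by
              rw [← hMsq]; field_simp
          _ ≤ ‖Vop n N p κ ξ₁ - Vop n N p κ ξ₂‖ ^ 2 := hcore'.1
      · calc ‖Vop n N p κ ξ₁ - Vop n N p κ ξ₂‖ ^ 2
            ≤ C₀ * ((κ + ‖ξ₂‖) ^ ((p-2)/2)) ^ 2 * ‖ξ₁ - ξ₂‖ ^ 2 := hcore'.2
          _ = C₀ * ((κ + ‖ξ₂‖) ^ (p-2) * ‖ξ₁ - ξ₂‖ ^ 2) := by rw [hMsq]; ring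
          _ ≤ C₀ * (((3:ℝ) ^ |p-2| * (κ + ‖ξ₁‖ + ‖ξ₁ - ξ₂‖) ^ (p-2)) * ‖ξ₁ - ξ₂‖ ^ 2) := by
              apply mul_le_mul_of_nonneg_left
                (mul_le_mul_of_nonneg_right hb2 (sq_nonneg _)) hC₀.le
          _ = C₀ * (3:ℝ) ^ |p-2| * ((κ + ‖ξ₁‖ + ‖ξ₁ - ξ₂‖) ^ (p-2) * ‖ξ₁ - ξ₂‖ ^ 2) := by
              ring
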